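/- Sufficiency of dual feasibility for collision avoidance (proposed formulation): if there exist λ ≥ 0, μ ≥ 0 with Cᵀ λ + Aᵀ μ = 0, Aᵀ μ ≠ 0, and (−λᵀ d − μᵀ b)/‖Aᵀ μ‖ ≥ d_safe, then sd(V, O) ≥ d_safe, where V = {x : C x ≤ d} and O = {x : A x ≤ b} are nonempty polyhedra. -/

import Mathlib

open Matrix

def toE (v : Fin 2 → ℝ) : EuclideanSpace ℝ (Fin 2) := WithLp.toLp 2 v

noncomputable def distSet (V O : Set (EuclideanSpace ℝ (Fin 2))) : ℝ :=
  sInf {r : ℝ | ∃ z : EuclideanSpace ℝ (Fin 2), r = ‖z‖ ∧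
    (((fun v => v + z) '' V) ∩ O).Nonempty}

noncomputable def penSet (V O : Set (EuclideanSpace ℝ (Fin 2))) : ℝ :=
  sInf {r : ℝ | ∃ z : EuclideanSpace ℝ (Fin 2), r = ‖z‖ ∧
    ¬(((fun v => v + z) '' V) ∩ O).Nonempty}

noncomputable def sd (V O : Set (EuclideanSpace ℝ (Fin 2))) : ℝ :=
  distSet V O - penSet V O

/-! A dual certificate `(λ, μ)` yields the vector `n = Aᵀμ = -Cᵀλ`, and for `x ∈ V`, `y ∈ O`,
`⟪n, y - x⟫ = μ ⬝ᵥ A y + λ ⬝ᵥ C x ≤ μ ⬝ᵥ b + λ ⬝ᵥ d ≤ -dsafe ‖n‖`. So every translation `z` that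
makes `V + z` meet `O` lies in the half-space `⟪n, z⟫ ≤ -dsafe ‖n‖`: it has length at least
`dsafe`, while every translation `t n / ‖n‖` with `t > -dsafe` separates the sets. Hence the
distance is at least `dsafe⁺` and the penetration depth at most `dsafe⁻`. -/

section DualCertificate

variable {R : Type*} [CommRing R] [PartialOrder R] [IsOrderedRing R]
  {m n p : Type*} [Fintype m] [Fintype n] [Fintype p]

lemma transpose_mulVec_dotProduct_le {A : Matrix m n R} {b mu : m → R} {y : n → R}
    (hmu : 0 ≤ mu) (hy : A *ᵥ y ≤ b) : Aᵀ *ᵥ mu ⬝ᵥ y ≤ mu ⬝ᵥ b := by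
  rw [mulVec_transpose, ← dotProduct_mulVec]
  exact dotProduct_le_dotProduct_of_nonneg_left hy hmu

lemma dotProduct_sub_le_of_dual_feasible {C : Matrix p n R} {d lam : p → R}
    {A : Matrix m n R} {b mu : m → R} {x y : n → R} (hlam : 0 ≤ lam) (hmu : 0 ≤ mu)
    (hdual : Cᵀ *ᵥ lam + Aᵀ *ᵥ mu = 0) (hx : C *ᵥ x ≤ d) (hy : A *ᵥ y ≤ b) :
    Aᵀ *ᵥ mu ⬝ᵥ (y - x) ≤ lam ⬝ᵥ d + mu ⬝ᵥ b := by
  have hAC : Aᵀ *ᵥ mu ⬝ᵥ x = -(Cᵀ *ᵥ lam ⬝ᵥ x) := by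
    rw [eq_neg_of_add_eq_zero_right hdual, neg_dotProduct]
  rw [dotProduct_sub, hAC, sub_neg_eq_add, add_comm (lam ⬝ᵥ d)]
  exact add_le_add (transpose_mulVec_dotProduct_le hmu hy) (transpose_mulVec_dotProduct_le hlam hx)

end DualCertificate

section InnerProductSpace

variable {F : Type*} [NormedAddCommGroup F] [InnerProductSpace ℝ F] {u z : F} {s t : ℝ}

lemma le_norm_of_inner_le_neg_mul_norm (hu : u ≠ 0) (h : inner ℝ u z ≤ -(s * ‖u‖)) :
    s ≤ ‖z‖ := by
  refine le_of_mul_le_mul_right ?_ (norm_pos_iff.2 hu)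
  calc s * ‖u‖ ≤ -inner ℝ u z := le_neg_of_le_neg h
    _ ≤ |inner ℝ u z| := neg_le_abs _
    _ ≤ ‖z‖ * ‖u‖ := (abs_real_inner_le_norm u z).trans_eq (mul_comm _ _)

lemma norm_smul_div_norm (hu : u ≠ 0) (ht : 0 ≤ t) : ‖(t / ‖u‖) • u‖ = t := by
  rw [norm_smul, Real.norm_of_nonneg (by positivity), div_mul_cancel₀ _ (norm_ne_zero_iff.2 hu)]

lemma inner_smul_div_norm (hu : u ≠ 0) : inner ℝ u ((t / ‖u‖) • u) = t * ‖u‖ := by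
  rw [real_inner_smul_right, real_inner_self_eq_norm_sq]
  field_simp [norm_ne_zero_iff.2 hu]

end InnerProductSpace

def Collides {E : Type*} [Add E] (V O : Set E) (z : E) : Prop :=
  (((fun v => v + z) '' V) ∩ O).Nonempty

lemma collides_iff {E : Type*} [Add E] {V O : Set E} {z : E} :
    Collides V O z ↔ ∃ x ∈ V, x + z ∈ O := by
  simp [Collides, Set.Nonempty]

lemma collides_sub {E : Type*} [AddCommGroup E] {V O : Set E} {x y : E} (hx : x ∈ V)
    (hy : y ∈ O) : Collides V O (y - x) :=
  collides_iff.2 ⟨x, hx, by rwa [add_sub_cancel]⟩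

section SignedDistance

variable {V O : Set (EuclideanSpace ℝ (Fin 2))} {s : ℝ}

lemma posPart_le_distSet (hV : V.Nonempty) (hO : O.Nonempty)
    (h : ∀ z, Collides V O z → s ≤ ‖z‖) : s⁺ ≤ distSet V O := by
  obtain ⟨x, hx⟩ := hV
  obtain ⟨y, hy⟩ := hO
  refine le_csInf ⟨_, _, rfl, collides_sub hx hy⟩ ?_
  rintro r ⟨z, rfl, hz⟩
  exact max_le (h z hz) (norm_nonneg z)

lemma penSet_le_negPart (h : ∀ t, s⁻ < t → ∃ z, ‖z‖ = t ∧ ¬ Collides V O z) :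
    penSet V O ≤ s⁻ := by
  refine le_of_forall_gt_imp_ge_of_dense fun t ht => ?_
  obtain ⟨z, rfl, hz⟩ := h t ht
  exact csInf_le ⟨0, by rintro r ⟨z, rfl, -⟩; exact norm_nonneg z⟩ ⟨z, rfl, hz⟩

theorem le_sd_of_collides_inner_le (hV : V.Nonempty) (hO : O.Nonempty)
    {u : EuclideanSpace ℝ (Fin 2)} (hu : u ≠ 0)
    (hsep : ∀ z, Collides V O z → inner ℝ u z ≤ -(s * ‖u‖)) : s ≤ sd V O := by
  have hdist : s⁺ ≤ distSet V O :=
    posPart_le_distSet hV hO fun z hz => le_norm_of_inner_le_neg_mul_norm hu (hsep z hz)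
  have hpen : penSet V O ≤ s⁻ := penSet_le_negPart fun t ht => by
    have ht0 : 0 < t := (negPart_nonneg s).trans_lt ht
    have hst : -s < t := (neg_le_negPart s).trans_lt ht
    refine ⟨(t / ‖u‖) • u, norm_smul_div_norm hu ht0.le, fun hz => ?_⟩
    have hinner := hsep _ hz
    rw [inner_smul_div_norm hu] at hinner
    nlinarith [norm_pos_iff.2 hu]
  rw [sd, ← posPart_sub_negPart s]
  linarith

end SignedDistance

theorem dual_feasibility_implies_collision_avoidance_proposed_general {L Lm : ℕ}
    (C : Matrix (Fin L) (Fin 2) ℝ) (d : Fin L → ℝ)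
    (A : Matrix (Fin Lm) (Fin 2) ℝ) (b : Fin Lm → ℝ)
    (V O : Set (EuclideanSpace ℝ (Fin 2)))
    (hV : V = {x | ∀ i, C.mulVec (WithLp.ofLp x) i ≤ d i})
    (hO : O = {x | ∀ i, A.mulVec (WithLp.ofLp x) i ≤ b i})
    (hVne : V.Nonempty) (hOne : O.Nonempty)
    (dsafe : ℝ)
    (h : ∃ (lam : Fin L → ℝ) (mu : Fin Lm → ℝ),
      0 ≤ lam ∧ 0 ≤ mu ∧
      Cᵀ.mulVec lam + Aᵀ.mulVec mu = 0 ∧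
      Aᵀ.mulVec mu ≠ 0 ∧
      (-(lam ⬝ᵥ d) - mu ⬝ᵥ b) / ‖toE (Aᵀ.mulVec mu)‖ ≥ dsafe) :
    sd V O ≥ dsafe := by
  obtain ⟨lam, mu, hlam, hmu, hdual, hne, hge⟩ := h
  set u := toE (Aᵀ *ᵥ mu)
  have hu : u ≠ 0 := fun hu => hne (congrArg WithLp.ofLp hu)
  have hbound : lam ⬝ᵥ d + mu ⬝ᵥ b ≤ -(dsafe * ‖u‖) := by
    rw [ge_iff_le, le_div_iff₀ (norm_pos_iff.2 hu)] at hge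
    linarith
  refine le_sd_of_collides_inner_le hVne hOne hu fun z hz => ?_
  obtain ⟨x, hxV, hxzO⟩ := collides_iff.1 hz
  rw [hV] at hxV
  rw [hO] at hxzO
  have hsep := dotProduct_sub_le_of_dual_feasible hlam hmu hdual hxV hxzO
  calc inner ℝ u z = Aᵀ *ᵥ mu ⬝ᵥ (WithLp.ofLp (x + z) - WithLp.ofLp x) := by
        simp [u, toE, EuclideanSpace.inner_eq_star_dotProduct, dotProduct_comm]
    _ ≤ -(dsafe * ‖u‖) := hsep.trans hbound

/-- sufficiency, proposed formulation: if there exist `λ ≥ 0`, `μ ≥ 0` with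
`Cᵀλ + Aᵀμ = 0`, `Aᵀμ ≠ 0` and `(−λᵀd − μᵀb)/‖Aᵀμ‖ ≥ d_safe`, then `sd(V, O) ≥ d_safe`. -/
theorem dual_feasibility_implies_collision_avoidance_proposed {L Lm : ℕ}
    (C : Matrix (Fin L) (Fin 2) ℝ) (d : Fin L → ℝ)
    (A : Matrix (Fin Lm) (Fin 2) ℝ) (b : Fin Lm → ℝ)
    (V O : Set (EuclideanSpace ℝ (Fin 2)))
    (hV : V = {x | ∀ i, C.mulVec (WithLp.ofLp x) i ≤ d i})
    (hO : O = {x | ∀ i, A.mulVec (WithLp.ofLp x) i ≤ b i})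
    (hVne : V.Nonempty) (hOne : O.Nonempty)
    (hVc : IsCompact V) (hOc : IsCompact O)
    (dsafe : ℝ)
    (h : ∃ (lam : Fin L → ℝ) (mu : Fin Lm → ℝ),
      0 ≤ lam ∧ 0 ≤ mu ∧
      Cᵀ.mulVec lam + Aᵀ.mulVec mu = 0 ∧
      Aᵀ.mulVec mu ≠ 0 ∧
      (-(lam ⬝ᵥ d) - mu ⬝ᵥ b) / ‖toE (Aᵀ.mulVec mu)‖ ≥ dsafe) :
    sd V O ≥ dsafe :=
  dual_feasibility_implies_collision_avoidance_proposed_general C d A b V O hV hO hVne hOne dsafe h
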